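/- Suppose for each k ∈ {1,…,N} the N² inequalities (for all x, i, j): |x|²_{P_{ik}} ≥ |x|²_Q + |K_k x|²_R + |(A_i − B_iK_k + A_j − B_jK_k)x/2|²_{(P_{ij}⁻¹−γ⁻²I)⁻¹} − γ²|(A_i − B_iK_k − A_j + B_jK_k)x/2|² hold, with 0 ≺ P_{ij} ≺ γ²I. Define z_i := γ² trace([I A_i B_i] Z [I A_i B_i]ᵀ) for a positive semidefinite Z, V^{ij}(x,Z) := |x|²_{P_{ij}} − (z_i + z_j)/2, and let k := argmin_i z_i. Then for all i, j and all x: max_v { |x|²_Q + |K_kx|²_R + V^{ij}(v, Z + zzᵀ) } ≤ V^{ik}(x, Z), where z = (−v, x, −K_kx). -/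

import Mathlib

/-!
Expanding `Z + z zᵀ` adds `γ² |(A_l - B_l K_k) x - v|²` to each `z_l`. By the parallelogram law the
two added terms for `l = i, j` equal `γ² |s - v|² + γ² |d|²`, where `s` and `d` are the half-sum and
half-difference of `(A_i - B_i K_k) x` and `(A_j - B_j K_k) x`. Completing the square against
`γ² I - P_ij ≻ 0` bounds `|v|²_{P_ij} - γ² |s - v|²` by `|s|²_{(P_ij⁻¹ - γ⁻² I)⁻¹}` for every `v`, so
the assumed matrix inequality closes the estimate, up to replacing `z_j(Z)` by the smaller `z_k(Z)`.
-/

open Matrix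

section

variable {ι κ : Type*} [Fintype ι] [Fintype κ]

theorem trace_mul_vecMulVec_self_mul_transpose (C : Matrix ι κ ℝ) (u : κ → ℝ) :
    (C * vecMulVec u u * Cᵀ).trace = (C *ᵥ u) ⬝ᵥ (C *ᵥ u) := by
  rw [vecMulVec_eq Unit, ← Matrix.mul_assoc, Matrix.mul_assoc (C * replicateCol Unit u),
    ← replicateCol_mulVec, ← replicateRow_vecMul, vecMul_transpose,
    trace_replicateCol_mul_replicateRow]

theorem dotProduct_sub_self_add_dotProduct_sub_self (a b v : ι → ℝ) :
    (a - v) ⬝ᵥ (a - v) + (b - v) ⬝ᵥ (b - v) =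
      2 * (((1 / 2 : ℝ) • (a + b) - v) ⬝ᵥ ((1 / 2 : ℝ) • (a + b) - v)) +
        2 * (((1 / 2 : ℝ) • (a - b)) ⬝ᵥ ((1 / 2 : ℝ) • (a - b))) := by
  simp only [dotProduct, Pi.sub_apply, Pi.add_apply, Pi.smul_apply, smul_eq_mul,
    Finset.mul_sum, ← Finset.sum_add_distrib]
  exact Finset.sum_congr rfl fun _ _ => by ring

end

section

variable {ι : Type*} [Fintype ι] [DecidableEq ι]

theorem inv_sub_inv_smul_one {𝕜 : Type*} [Field 𝕜] {c : 𝕜} (hc : c ≠ 0)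
    {P : Matrix ι ι 𝕜} (hP : IsUnit P.det) (hM : IsUnit (c • 1 - P).det) :
    (P⁻¹ - c⁻¹ • 1)⁻¹ = c ^ 2 • (c • 1 - P)⁻¹ - c • 1 := by
  set M := c • (1 : Matrix ι ι 𝕜) - P
  have hfactor : P⁻¹ - c⁻¹ • 1 = c⁻¹ • (P⁻¹ * M) := by
    rw [Matrix.mul_sub, Matrix.mul_smul, Matrix.mul_one, nonsing_inv_mul _ hP, smul_sub,
      smul_smul, inv_mul_cancel₀ hc, one_smul]
  have hright : c ^ 2 • M⁻¹ - c • 1 = c • (M⁻¹ * P) := by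
    rw [show P = c • 1 - M by simp [M], Matrix.mul_sub, Matrix.mul_smul, Matrix.mul_one,
      nonsing_inv_mul _ hM, smul_sub, smul_smul, sq]
  rw [hfactor, hright]
  refine inv_eq_right_inv ?_
  rw [Matrix.smul_mul, Matrix.mul_smul, smul_smul, inv_mul_cancel₀ hc, one_smul,
    Matrix.mul_assoc, ← Matrix.mul_assoc M, mul_nonsing_inv _ hM, Matrix.one_mul,
    nonsing_inv_mul _ hP]

theorem two_mul_dotProduct_sub_le {M : Matrix ι ι ℝ} (hM : M.PosDef) (s v : ι → ℝ) :
    2 * (s ⬝ᵥ v) - v ⬝ᵥ (M *ᵥ v) ≤ s ⬝ᵥ (M⁻¹ *ᵥ s) := by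
  have hMM : M * M⁻¹ = 1 := mul_nonsing_inv _ hM.det_pos.ne'.isUnit
  have hsym : Mᵀ = M := by rw [← conjTranspose_eq_transpose_of_trivial, hM.1.eq]
  have hsq : 0 ≤ (v - M⁻¹ *ᵥ s) ⬝ᵥ (M *ᵥ (v - M⁻¹ *ᵥ s)) := by
    simpa using hM.posSemidef.re_dotProduct_nonneg (v - M⁻¹ *ᵥ s)
  have hcross : v ⬝ᵥ (M *ᵥ (M⁻¹ *ᵥ s)) = s ⬝ᵥ v := by
    rw [mulVec_mulVec, hMM, one_mulVec, dotProduct_comm]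
  have hcross' : (M⁻¹ *ᵥ s) ⬝ᵥ (M *ᵥ v) = s ⬝ᵥ v := by
    rw [dotProduct_mulVec, ← mulVec_transpose, hsym, mulVec_mulVec, hMM, one_mulVec]
  have hlast : (M⁻¹ *ᵥ s) ⬝ᵥ (M *ᵥ (M⁻¹ *ᵥ s)) = s ⬝ᵥ (M⁻¹ *ᵥ s) := by
    rw [mulVec_mulVec, hMM, one_mulVec, dotProduct_comm]
  simp only [mulVec_sub, dotProduct_sub, sub_dotProduct, hcross, hcross', hlast] at hsq
  linarith

theorem dotProduct_mulVec_sub_le_inv_sub_inv_smul_one {c : ℝ} (hc : 0 < c)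
    {P : Matrix ι ι ℝ} (hP : IsUnit P.det) (hM : (c • 1 - P).PosDef) (s v : ι → ℝ) :
    v ⬝ᵥ (P *ᵥ v) - c * ((s - v) ⬝ᵥ (s - v)) ≤ s ⬝ᵥ ((P⁻¹ - c⁻¹ • 1)⁻¹ *ᵥ s) := by
  have hsquare := two_mul_dotProduct_sub_le hM (c • s) v
  rw [inv_sub_inv_smul_one hc.ne' hP hM.det_pos.ne'.isUnit]
  simp only [sub_mulVec, smul_mulVec, one_mulVec, mulVec_smul, dotProduct_sub, sub_dotProduct,
    dotProduct_smul, smul_dotProduct, smul_eq_mul, dotProduct_comm v s] at hsquare ⊢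
  linarith

end

theorem fromCols_one_fromCols_mulVec_sumElim {n m : Type*} [Fintype n] [Fintype m]
    [DecidableEq n] (A : Matrix n n ℝ) (B : Matrix n m ℝ) (K : Matrix m n ℝ) (x v : n → ℝ) :
    fromCols 1 (fromCols A B) *ᵥ Sum.elim (-v) (Sum.elim x (-(K *ᵥ x))) =
      (A - B * K) *ᵥ x - v := by
  rw [fromCols_mulVec_sumElim, fromCols_mulVec_sumElim, one_mulVec, sub_mulVec,
    ← mulVec_mulVec, mulVec_neg]
  abel

theorem stmt14_general (n m N : ℕ) (γ : ℝ) (hγ : 0 < γ)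
    (A : Fin N → Matrix (Fin n) (Fin n) ℝ) (B : Fin N → Matrix (Fin n) (Fin m) ℝ)
    (K : Fin N → Matrix (Fin m) (Fin n) ℝ)
    (P : Fin N → Fin N → Matrix (Fin n) (Fin n) ℝ)
    (Q : Matrix (Fin n) (Fin n) ℝ) (R : Matrix (Fin m) (Fin m) ℝ)
    (hP : ∀ i j, (P i j).PosDef)
    (hPγ : ∀ i j, (γ ^ 2 • (1 : Matrix (Fin n) (Fin n) ℝ) - P i j).PosDef)
    (hPik : ∀ (i j k : Fin N) (x : Fin n → ℝ),
      x ⬝ᵥ (P i k *ᵥ x) ≥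
        x ⬝ᵥ (Q *ᵥ x) + (K k *ᵥ x) ⬝ᵥ (R *ᵥ (K k *ᵥ x)) +
          ((1 / 2 : ℝ) • ((A i - B i * K k + A j - B j * K k) *ᵥ x)) ⬝ᵥ
            (((P i j)⁻¹ - (γ ^ 2)⁻¹ • (1 : Matrix (Fin n) (Fin n) ℝ))⁻¹ *ᵥ
              ((1 / 2 : ℝ) • ((A i - B i * K k + A j - B j * K k) *ᵥ x))) -
          γ ^ 2 * (((1 / 2 : ℝ) • ((A i - B i * K k - A j + B j * K k) *ᵥ x)) ⬝ᵥ
            ((1 / 2 : ℝ) • ((A i - B i * K k - A j + B j * K k) *ᵥ x))))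
    (Z : Matrix (Fin n ⊕ (Fin n ⊕ Fin m)) (Fin n ⊕ (Fin n ⊕ Fin m)) ℝ)
    (k : Fin N) :
    let blk := fun (i : Fin N) => Matrix.fromCols (1 : Matrix (Fin n) (Fin n) ℝ) (Matrix.fromCols (A i) (B i))
    let zc := fun (i : Fin N)
        (W : Matrix (Fin n ⊕ (Fin n ⊕ Fin m)) (Fin n ⊕ (Fin n ⊕ Fin m)) ℝ) =>
      γ ^ 2 * (blk i * W * (blk i)ᵀ).trace
    let V := fun (i j : Fin N) (x : Fin n → ℝ)
        (W : Matrix (Fin n ⊕ (Fin n ⊕ Fin m)) (Fin n ⊕ (Fin n ⊕ Fin m)) ℝ) =>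
      x ⬝ᵥ (P i j *ᵥ x) - (zc i W + zc j W) / 2
    (∀ i, zc k Z ≤ zc i Z) →
      ∀ (i j : Fin N) (x : Fin n → ℝ) (v : Fin n → ℝ),
        x ⬝ᵥ (Q *ᵥ x) + (K k *ᵥ x) ⬝ᵥ (R *ᵥ (K k *ᵥ x)) +
            V i j v (Z + vecMulVec (Sum.elim (-v) (Sum.elim x (-(K k *ᵥ x))))
              (Sum.elim (-v) (Sum.elim x (-(K k *ᵥ x)))))
          ≤ V i k x Z := by
  intro blk zc V hmin i j x v
  set u := Sum.elim (-v) (Sum.elim x (-(K k *ᵥ x)))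
  set w := fun l => (A l - B l * K k) *ᵥ x
  have hz : ∀ l, zc l (Z + vecMulVec u u) = zc l Z + γ ^ 2 * ((w l - v) ⬝ᵥ (w l - v)) := by
    intro l
    simp only [zc, blk, Matrix.mul_add, Matrix.add_mul, trace_add,
      trace_mul_vecMulVec_self_mul_transpose, u, fromCols_one_fromCols_mulVec_sumElim, mul_add, w]
  have hsum : (A i - B i * K k + A j - B j * K k) *ᵥ x = w i + w j := by
    simp only [w, ← add_mulVec]; abel_nf
  have hdiff : (A i - B i * K k - A j + B j * K k) *ᵥ x = w i - w j := by
    simp only [w, ← sub_mulVec]; abel_nf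
  have hcond := hPik i j k x
  rw [hsum, hdiff] at hcond
  have hmax := dotProduct_mulVec_sub_le_inv_sub_inv_smul_one (pow_pos hγ 2)
    (hP i j).det_pos.ne'.isUnit (hPγ i j) ((1 / 2 : ℝ) • (w i + w j)) v
  have hpar := congrArg (γ ^ 2 * ·) (dotProduct_sub_self_add_dotProduct_sub_self (w i) (w j) v)
  simp only [V, hz] at hpar ⊢
  linarith [hmin j]

theorem stmt14 (n m N : ℕ) (γ : ℝ) (hγ : 0 < γ)
    (A : Fin N → Matrix (Fin n) (Fin n) ℝ) (B : Fin N → Matrix (Fin n) (Fin m) ℝ)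
    (K : Fin N → Matrix (Fin m) (Fin n) ℝ)
    (P : Fin N → Fin N → Matrix (Fin n) (Fin n) ℝ)
    (Q : Matrix (Fin n) (Fin n) ℝ) (R : Matrix (Fin m) (Fin m) ℝ)
    (hQ : Q.PosDef) (hR : R.PosDef)
    (hP : ∀ i j, (P i j).PosDef)
    (hPγ : ∀ i j, (γ ^ 2 • (1 : Matrix (Fin n) (Fin n) ℝ) - P i j).PosDef)
    (hPik : ∀ (i j k : Fin N) (x : Fin n → ℝ),
      x ⬝ᵥ (P i k *ᵥ x) ≥
        x ⬝ᵥ (Q *ᵥ x) + (K k *ᵥ x) ⬝ᵥ (R *ᵥ (K k *ᵥ x)) +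
          ((1 / 2 : ℝ) • ((A i - B i * K k + A j - B j * K k) *ᵥ x)) ⬝ᵥ
            (((P i j)⁻¹ - (γ ^ 2)⁻¹ • (1 : Matrix (Fin n) (Fin n) ℝ))⁻¹ *ᵥ
              ((1 / 2 : ℝ) • ((A i - B i * K k + A j - B j * K k) *ᵥ x))) -
          γ ^ 2 * (((1 / 2 : ℝ) • ((A i - B i * K k - A j + B j * K k) *ᵥ x)) ⬝ᵥ
            ((1 / 2 : ℝ) • ((A i - B i * K k - A j + B j * K k) *ᵥ x))))
    (Z : Matrix (Fin n ⊕ (Fin n ⊕ Fin m)) (Fin n ⊕ (Fin n ⊕ Fin m)) ℝ)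
    (hZ : Z.PosSemidef) (k : Fin N) :
    let blk := fun (i : Fin N) => Matrix.fromCols (1 : Matrix (Fin n) (Fin n) ℝ) (Matrix.fromCols (A i) (B i))
    let zc := fun (i : Fin N)
        (W : Matrix (Fin n ⊕ (Fin n ⊕ Fin m)) (Fin n ⊕ (Fin n ⊕ Fin m)) ℝ) =>
      γ ^ 2 * (blk i * W * (blk i)ᵀ).trace
    let V := fun (i j : Fin N) (x : Fin n → ℝ)
        (W : Matrix (Fin n ⊕ (Fin n ⊕ Fin m)) (Fin n ⊕ (Fin n ⊕ Fin m)) ℝ) =>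
      x ⬝ᵥ (P i j *ᵥ x) - (zc i W + zc j W) / 2
    (∀ i, zc k Z ≤ zc i Z) →
      ∀ (i j : Fin N) (x : Fin n → ℝ) (v : Fin n → ℝ),
        x ⬝ᵥ (Q *ᵥ x) + (K k *ᵥ x) ⬝ᵥ (R *ᵥ (K k *ᵥ x)) +
            V i j v (Z + vecMulVec (Sum.elim (-v) (Sum.elim x (-(K k *ᵥ x))))
              (Sum.elim (-v) (Sum.elim x (-(K k *ᵥ x)))))
          ≤ V i k x Z :=
  stmt14_general n m N γ hγ A B K P Q R hP hPγ hPik Z k
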